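/- In the Bayesian investment model with discrete prior, for every T > 0 the optimal investment fraction at time 0 with observation y = 0 satisfies lim_{γ → 1} κ(0, T, 0) = (σ^⊤)^{−1} ∑_{k=1}^m ϑ_k p_k, where the limit is taken in the risk-aversion parameter γ (this corresponds to the logarithmic-utility limit α → 0, since γ = 1/(1−α)). -/

import Mathlib

open MeasureTheory Real Filter

/-- Density of the `N(0, T·I_d)` distribution on `ℝ^d`. -/
noncomputable def gaussDensity (d : ℕ) (T : ℝ) (z : Fin d → ℝ) : ℝ :=
  (2 * π * T) ^ (-(d : ℝ) / 2) * Real.exp (-(∑ i, z i ^ 2) / (2 * T))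

/-- Likelihood factor `L_t(ϑ, z) = exp(⟨z, ϑ⟩ - ½‖ϑ‖²t)`. -/
noncomputable def likelihood (d : ℕ) (t : ℝ) (ϑ z : Fin d → ℝ) : ℝ :=
  Real.exp ((∑ i, z i * ϑ i) - (∑ i, ϑ i ^ 2) * t / 2)

/-- `F(t, z) = ∑_k p_k L_t(ϑ_k, z)` for the discrete prior `(p_k, ϑ_k)`. -/
noncomputable def priorF (d m : ℕ) (p : Fin m → ℝ) (ϑ : Fin m → Fin d → ℝ)
    (t : ℝ) (z : Fin d → ℝ) : ℝ :=
  ∑ k, p k * likelihood d t (ϑ k) z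

/-- Optimal Bayesian investment fraction
`κ(t, T, y) = γ (σᵀ)⁻¹ [∫ (∑_k p_k ϑ_k L_T(ϑ_k, y+z)) F(T, y+z)^{γ-1} φ_{T-t}(z) dz] /
[∫ F(T, y+z)^γ φ_{T-t}(z) dz]`. -/
noncomputable def kappa (d m : ℕ) (σ : Matrix (Fin d) (Fin d) ℝ)
    (p : Fin m → ℝ) (ϑ : Fin m → Fin d → ℝ) (γ t T : ℝ) (y : Fin d → ℝ) :
    Fin d → ℝ :=
  γ • ((σ.transpose)⁻¹).mulVec
    ((∫ z : Fin d → ℝ, priorF d m p ϑ T (y + z) ^ γ * gaussDensity d (T - t) z)⁻¹ •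
      ∫ z : Fin d → ℝ,
        (priorF d m p ϑ T (y + z) ^ (γ - 1) * gaussDensity d (T - t) z) •
          ∑ k, (p k * likelihood d T (ϑ k) (y + z)) • ϑ k)

lemma int1d {T : ℝ} (hT : 0 < T) (c : ℝ) :
    Integrable (fun x : ℝ => exp (c * x - x ^ 2 / (2 * T))) := by
  have h2T : (0:ℝ) < 1 / (2 * T) := by positivity
  have key : ∀ x : ℝ, c * x - x ^ 2 / (2 * T)
      = -(1 / (2 * T)) * (x - c * T) ^ 2 + c ^ 2 * T / 2 := by
    intro x; field_simp; ring
  simp_rw [key, Real.exp_add]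
  exact ((integrable_exp_neg_mul_sq h2T).comp_sub_right (c * T)).mul_const _

lemma val1d {T : ℝ} (hT : 0 < T) (c : ℝ) :
    ∫ x : ℝ, exp (c * x - x ^ 2 / (2 * T)) = Real.sqrt (2 * π * T) * exp (c ^ 2 * T / 2) := by
  have h2T : (0:ℝ) < 1 / (2 * T) := by positivity
  have key : ∀ x : ℝ, c * x - x ^ 2 / (2 * T)
      = -(1 / (2 * T)) * (x - c * T) ^ 2 + c ^ 2 * T / 2 := by
    intro x; field_simp; ring
  simp_rw [key, Real.exp_add]
  rw [integral_mul_const,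
    integral_sub_right_eq_self (μ := volume) (fun x => exp (-(1 / (2 * T)) * x ^ 2)) (c * T),
    integral_gaussian]
  congr 2
  field_simp

lemma exp_gauss_eq {d : ℕ} {T : ℝ} (hT : 0 < T) (c : Fin d → ℝ) :
    (fun z : Fin d → ℝ => exp (∑ i, z i * c i) * gaussDensity d T z)
      = fun z => (2 * π * T) ^ (-(d : ℝ) / 2) * ∏ i, exp (c i * z i - z i ^ 2 / (2 * T)) := by
  funext z
  rw [← Real.exp_sum]
  unfold gaussDensity
  rw [← mul_assoc, mul_comm (exp _), mul_assoc, ← Real.exp_add]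
  congr 1
  rw [Finset.sum_sub_distrib, ← Finset.sum_div]
  have : ∑ i, c i * z i = ∑ i, z i * c i := Finset.sum_congr rfl fun i _ => mul_comm _ _
  rw [this]; ring

lemma int_exp_gauss {d : ℕ} {T : ℝ} (hT : 0 < T) (c : Fin d → ℝ) :
    Integrable (fun z : Fin d → ℝ => exp (∑ i, z i * c i) * gaussDensity d T z) := by
  rw [exp_gauss_eq hT]
  exact (Integrable.fintype_prod fun i => int1d hT (c i)).const_mul _

lemma val_exp_gauss {d : ℕ} {T : ℝ} (hT : 0 < T) (c : Fin d → ℝ) :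
    ∫ z : Fin d → ℝ, exp (∑ i, z i * c i) * gaussDensity d T z
      = exp ((∑ i, c i ^ 2) * T / 2) := by
  have h2πT : (0:ℝ) < 2 * π * T := by positivity
  rw [exp_gauss_eq hT, integral_const_mul, integral_fintype_prod_volume_eq_prod (f := fun i (x:ℝ) => exp (c i * x - x ^ 2 / (2*T)))]
  simp_rw [val1d hT]
  rw [Finset.prod_mul_distrib, Finset.prod_const, ← Real.exp_sum]
  have hsq : Real.sqrt (2 * π * T) ^ (Finset.univ (α := Fin d)).card = (2 * π * T) ^ ((d : ℝ) / 2) := by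
    rw [Finset.card_univ, Fintype.card_fin, Real.sqrt_eq_rpow, ← Real.rpow_natCast ((2*π*T) ^ ((1:ℝ)/2)) d,
      ← Real.rpow_mul h2πT.le]
    rw [mul_comm]
    norm_num [div_eq_mul_inv, mul_comm]
  rw [hsq, ← mul_assoc, ← Real.rpow_add h2πT]
  have : -(d:ℝ)/2 + (d:ℝ)/2 = 0 := by ring
  rw [this, Real.rpow_zero, one_mul]
  congr 1
  rw [Finset.sum_mul, Finset.sum_div]

lemma lik_gauss_eq {d : ℕ} {T : ℝ} (ϑ : Fin d → ℝ) :
    (fun z : Fin d → ℝ => likelihood d T ϑ z * gaussDensity d T z)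
      = fun z => exp (-(∑ i, ϑ i ^ 2) * T / 2) * (exp (∑ i, z i * ϑ i) * gaussDensity d T z) := by
  funext z
  unfold likelihood
  rw [← mul_assoc, ← Real.exp_add]
  congr 2
  ring

lemma int_lik_gauss {d : ℕ} {T : ℝ} (hT : 0 < T) (ϑ : Fin d → ℝ) :
    Integrable (fun z : Fin d → ℝ => likelihood d T ϑ z * gaussDensity d T z) := by
  rw [lik_gauss_eq]
  exact (int_exp_gauss hT ϑ).const_mul _

lemma val_lik_gauss {d : ℕ} {T : ℝ} (hT : 0 < T) (ϑ : Fin d → ℝ) :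
    ∫ z : Fin d → ℝ, likelihood d T ϑ z * gaussDensity d T z = 1 := by
  rw [lik_gauss_eq, integral_const_mul, val_exp_gauss hT, ← Real.exp_add]
  rw [show -(∑ i, ϑ i ^ 2) * T / 2 + (∑ i, ϑ i ^ 2) * T / 2 = 0 by ring, Real.exp_zero]

lemma int_liklik_gauss {d : ℕ} {T : ℝ} (hT : 0 < T) (ϑ₁ ϑ₂ : Fin d → ℝ) :
    Integrable (fun z : Fin d → ℝ =>
      likelihood d T ϑ₁ z * likelihood d T ϑ₂ z * gaussDensity d T z) := by
  have : (fun z : Fin d → ℝ => likelihood d T ϑ₁ z * likelihood d T ϑ₂ z * gaussDensity d T z)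
      = fun z => exp (-((∑ i, ϑ₁ i ^ 2) + ∑ i, ϑ₂ i ^ 2) * T / 2) *
          (exp (∑ i, z i * (ϑ₁ i + ϑ₂ i)) * gaussDensity d T z) := by
    funext z
    unfold likelihood
    rw [← Real.exp_add, ← mul_assoc, ← Real.exp_add]
    congr 1
    simp only [mul_add, Finset.sum_add_distrib]
    ring
  rw [this]
  exact ((int_exp_gauss hT _).const_mul _)

section main
variable {d m : ℕ} {T : ℝ}

lemma gauss_pos (hT : 0 < T) (z : Fin d → ℝ) : 0 < gaussDensity d T z := by
  unfold gaussDensity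
  have : (0:ℝ) < 2 * π * T := by positivity
  positivity

lemma priorF_pos (hm : 1 ≤ m) (p : Fin m → ℝ) (hp : ∀ k, 0 < p k) (ϑ : Fin m → Fin d → ℝ) : ∀ z, 0 < priorF d m p ϑ T z := by
  intro z
  have : Nonempty (Fin m) := Fin.pos_iff_nonempty.mp (by omega)
  exact Finset.sum_pos (fun k _ => mul_pos (hp k) (Real.exp_pos _)) Finset.univ_nonempty

lemma priorF_continuous (p : Fin m → ℝ) (ϑ : Fin m → Fin d → ℝ) : Continuous (priorF d m p ϑ T) := by
  unfold priorF likelihood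
  exact continuous_finset_sum _ fun k _ => continuous_const.mul <|
    Real.continuous_exp.comp <|
      ((continuous_finset_sum _ fun i _ => (continuous_apply i).mul continuous_const)).sub
        continuous_const

lemma gauss_continuous : Continuous (gaussDensity d T) := by
  unfold gaussDensity
  exact continuous_const.mul <| Real.continuous_exp.comp <|
    ((continuous_finset_sum _ fun i _ => (continuous_apply i).pow 2).neg).div_const _

lemma int_gauss (hT : 0 < T) : Integrable (fun z : Fin d → ℝ => gaussDensity d T z) := by
  have := int_exp_gauss hT (0 : Fin d → ℝ)
  simpa using this

lemma int_F2_gauss (hT : 0 < T) (p : Fin m → ℝ) (ϑ : Fin m → Fin d → ℝ) :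
    Integrable (fun z : Fin d → ℝ =>
      priorF d m p ϑ T z * priorF d m p ϑ T z * gaussDensity d T z) := by
  have : (fun z : Fin d → ℝ => priorF d m p ϑ T z * priorF d m p ϑ T z * gaussDensity d T z)
      = fun z => ∑ a : Fin m, ∑ b : Fin m,
          (p a * p b) * (likelihood d T (ϑ a) z * likelihood d T (ϑ b) z * gaussDensity d T z) := by
    funext z
    unfold priorF
    rw [Finset.sum_mul_sum, Finset.sum_mul]
    refine Finset.sum_congr rfl fun a _ => ?_
    rw [Finset.sum_mul]
    exact Finset.sum_congr rfl fun b _ => by ring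
  rw [this]
  exact integrable_finset_sum _ fun a _ => integrable_finset_sum _ fun b _ =>
    (int_liklik_gauss hT (ϑ a) (ϑ b)).const_mul _

lemma int_bound (hT : 0 < T) (p : Fin m → ℝ) (ϑ : Fin m → Fin d → ℝ) :
    Integrable (fun z : Fin d → ℝ =>
      (1 + priorF d m p ϑ T z * priorF d m p ϑ T z) * gaussDensity d T z) := by
  simp_rw [add_mul, one_mul]
  exact (int_gauss hT).add (int_F2_gauss hT p ϑ)

lemma rpow_le_bound {x : ℝ} (hx : 0 < x) {γ : ℝ} (h0 : 0 ≤ γ) (h2 : γ ≤ 2) :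
    x ^ γ ≤ 1 + x * x := by
  rcases le_total x 1 with h | h
  · have : x ^ γ ≤ x ^ (0:ℝ) := Real.rpow_le_rpow_of_exponent_ge hx h h0
    rw [Real.rpow_zero] at this
    nlinarith [mul_self_nonneg x]
  · have : x ^ γ ≤ x ^ (2:ℝ) := Real.rpow_le_rpow_of_exponent_le h h2
    rw [show (2:ℝ) = ((2:ℕ):ℝ) by norm_num, Real.rpow_natCast] at this
    nlinarith

end main

/-- Logarithmic-utility limit: as the risk-aversion parameter `γ` tends to `1`
(corresponding to `α → 0`, since `γ = 1/(1-α)`), the Bayesian optimal investment fraction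
at time `0` with observation `y = 0` tends to `(σᵀ)⁻¹ ∑_k ϑ_k p_k`. -/
theorem stmt_13 (d m : ℕ) (hd : 1 ≤ d) (hm : 1 ≤ m)
    (σ : Matrix (Fin d) (Fin d) ℝ) (hσ : IsUnit σ.det)
    (p : Fin m → ℝ) (hp : ∀ k, 0 < p k) (hpsum : ∑ k, p k = 1)
    (ϑ : Fin m → Fin d → ℝ) (T : ℝ) (hT : 0 < T) :
    Tendsto (fun γ => kappa d m σ p ϑ γ 0 T (0 : Fin d → ℝ))
      (nhdsWithin 1 {(1 : ℝ)}ᶜ)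
      (nhds (((σ.transpose)⁻¹).mulVec (∑ k, p k • ϑ k))) := by
  set F : (Fin d → ℝ) → ℝ := priorF d m p ϑ T with hF
  set g : (Fin d → ℝ) → ℝ := gaussDensity d T with hg
  set v : (Fin d → ℝ) → (Fin d → ℝ) :=
    fun z => ∑ k, (p k * likelihood d T (ϑ k) z) • ϑ k with hv
  set A : ℝ → ℝ := fun γ => ∫ z, F z ^ γ * g z with hA
  set B : ℝ → (Fin d → ℝ) := fun γ => ∫ z, (F z ^ (γ - 1) * g z) • v z with hB
  have hFpos := priorF_pos (T := T) hm p hp ϑ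
  have hgpos := gauss_pos (d := d) hT
  -- continuity of A
  have hcontA : ContinuousAt A 1 := by
    apply continuousAt_of_dominated (bound := fun z => (1 + F z * F z) * g z)
    · exact Eventually.of_forall fun γ =>
        (((priorF_continuous p ϑ).rpow_const fun z => Or.inl (hFpos z).ne').mul
          gauss_continuous).aestronglyMeasurable
    · filter_upwards [Ioo_mem_nhds (by norm_num : (0:ℝ) < 1) (by norm_num : (1:ℝ) < 2)]
        with γ hγ
      refine ae_of_all _ fun z => ?_
      rw [Real.norm_eq_abs, abs_of_nonneg (mul_nonneg (Real.rpow_nonneg (hFpos z).le _)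
        (hgpos z).le)]
      exact mul_le_mul_of_nonneg_right (rpow_le_bound (hFpos z) hγ.1.le hγ.2.le) (hgpos z).le
    · exact int_bound hT p ϑ
    · exact ae_of_all _ fun z =>
        (Real.continuousAt_const_rpow (hFpos z).ne').mul continuousAt_const
  -- continuity of B
  have hcontB : ContinuousAt B 1 := by
    apply continuousAt_of_dominated
      (bound := fun z => (∑ k, ‖ϑ k‖) * ((1 + F z * F z) * g z))
    · refine Eventually.of_forall fun γ => Continuous.aestronglyMeasurable ?_
      refine (((priorF_continuous p ϑ).rpow_const fun z => Or.inl (hFpos z).ne').mul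
        gauss_continuous).smul ?_
      refine continuous_finset_sum _ fun k _ => Continuous.smul (f := fun z => p k * likelihood d T (ϑ k) z) (g := fun _ => ϑ k) ?_ continuous_const
      exact continuous_const.mul <| Real.continuous_exp.comp <|
        ((continuous_finset_sum _ fun i _ =>
          (continuous_apply i).mul continuous_const)).sub continuous_const
    · filter_upwards [Ioo_mem_nhds (by norm_num : (0:ℝ) < 1) (by norm_num : (1:ℝ) < 2)]
        with γ hγ
      refine ae_of_all _ fun z => ?_
      have hvle : ‖v z‖ ≤ (∑ k, ‖ϑ k‖) * F z := by
        refine le_trans (norm_sum_le _ _) ?_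
        rw [Finset.sum_mul]
        refine Finset.sum_le_sum fun k _ => ?_
        have hLpos : (0:ℝ) < likelihood d T (ϑ k) z := Real.exp_pos _
        rw [norm_smul, Real.norm_eq_abs, abs_of_nonneg (mul_nonneg (hp k).le hLpos.le)]
        have hle : p k * likelihood d T (ϑ k) z ≤ F z :=
          Finset.single_le_sum (f := fun k => p k * likelihood d T (ϑ k) z)
            (fun k _ => mul_nonneg (hp k).le (le_of_lt (Real.exp_pos _))) (Finset.mem_univ k)
        calc p k * likelihood d T (ϑ k) z * ‖ϑ k‖ ≤ F z * ‖ϑ k‖ :=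
              mul_le_mul_of_nonneg_right hle (norm_nonneg _)
          _ = ‖ϑ k‖ * F z := mul_comm _ _
      rw [norm_smul, Real.norm_eq_abs, abs_of_nonneg (mul_nonneg
        (Real.rpow_nonneg (hFpos z).le _) (hgpos z).le)]
      calc F z ^ (γ - 1) * g z * ‖v z‖
          ≤ F z ^ (γ - 1) * g z * ((∑ k, ‖ϑ k‖) * F z) := by
            exact mul_le_mul_of_nonneg_left hvle (mul_nonneg
              (Real.rpow_nonneg (hFpos z).le _) (hgpos z).le)
        _ = (∑ k, ‖ϑ k‖) * ((F z ^ (γ - 1) * F z) * g z) := by ring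
        _ = (∑ k, ‖ϑ k‖) * (F z ^ γ * g z) := by
            rw [← Real.rpow_add_one (hFpos z).ne', sub_add_cancel]
        _ ≤ (∑ k, ‖ϑ k‖) * ((1 + F z * F z) * g z) := by
            refine mul_le_mul_of_nonneg_left ?_
              (Finset.sum_nonneg fun k _ => norm_nonneg _)
            exact mul_le_mul_of_nonneg_right
              (rpow_le_bound (hFpos z) hγ.1.le hγ.2.le) (hgpos z).le
    · exact (int_bound hT p ϑ).const_mul _
    · refine ae_of_all _ fun z => ContinuousAt.smul (f := fun x => F z ^ (x - 1) * g z) (g := fun _ => v z) ?_ continuousAt_const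
      exact (((Real.continuousAt_const_rpow (hFpos z).ne').comp
        (continuousAt_id.sub continuousAt_const)).mul continuousAt_const)
  -- values at 1
  have hA1 : A 1 = 1 := by
    have : A 1 = ∫ z, ∑ k, p k * (likelihood d T (ϑ k) z * g z) := by
      simp only [hA, Real.rpow_one, hF, priorF, Finset.sum_mul, mul_assoc]
    rw [this, integral_finset_sum _ fun k _ => ((int_lik_gauss hT (ϑ k)).const_mul (p k))]
    simp_rw [integral_const_mul, val_lik_gauss hT, mul_one, hpsum]
  have hB1 : B 1 = ∑ k, p k • ϑ k := by
    have : B 1 = ∫ z, ∑ k, (p k * (likelihood d T (ϑ k) z * g z)) • ϑ k := by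
      simp only [hB, sub_self, Real.rpow_zero, one_mul, hv, Finset.smul_sum, smul_smul]
      congr 1; funext z
      exact Finset.sum_congr rfl fun k _ => by rw [mul_comm, mul_assoc]
    rw [this, integral_finset_sum _ fun k _ =>
      (((int_lik_gauss hT (ϑ k)).const_mul (p k)).smul_const (ϑ k))]
    refine Finset.sum_congr rfl fun k _ => ?_
    rw [integral_smul_const, integral_const_mul, val_lik_gauss hT, mul_one]
  -- rewrite kappa
  have hkap : (fun γ => kappa d m σ p ϑ γ 0 T (0 : Fin d → ℝ))
      = fun γ => γ • ((σ.transpose)⁻¹).mulVec ((A γ)⁻¹ • B γ) := by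
    funext γ
    simp only [kappa, zero_add, sub_zero, hA, hB, hF, hg, hv]
  have hM : Continuous fun w : Fin d → ℝ => ((σ.transpose)⁻¹).mulVec w := by
    unfold Matrix.mulVec dotProduct
    exact continuous_pi fun i => continuous_finset_sum _ fun j _ =>
      continuous_const.mul (continuous_apply j)
  have hK : ContinuousAt (fun γ => γ • ((σ.transpose)⁻¹).mulVec ((A γ)⁻¹ • B γ)) 1 :=
    continuousAt_id.smul (hM.continuousAt.comp
      ((hcontA.inv₀ (by rw [hA1]; norm_num)).smul hcontB))
  have := hK.tendsto.mono_left (nhdsWithin_le_nhds (s := {(1:ℝ)}ᶜ))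
  rw [hA1, hB1] at this
  rw [hkap]
  simpa using this
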